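/- arXiv:2512.00697 — 4 statements merged into one kernel-verified Lean document; each statement's English description precedes it below -/
import Mathlib

section
/- Given any constants C, D and integer d ≥ 1 there exist constants E = E(C,D,d) and F = F(C,D,d) such that the following holds. Let K be a field and let f_1,...,f_s ∈ K[x_1,...,x_n] be homogeneous polynomials of positive degrees at most d, and let r ≥ 0. Then there exists a (C,D,r)-strong tower 𝔽 of degree (1,2,...,d) with total number of forms s_1+...+s_h ≤ E·(s+r)^F such that the ideal (f_1,...,f_s) is contained in the ideal generated by 𝔽. Moreover, if all the f_i have odd degrees, then 𝔽 can be chosen to consist only of forms of odd degree. -/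
open MvPolynomial

/-- `StrLE I d f r` : the form `f` (of degree `d`) has strength at most `r` relative to the
homogeneous ideal `I`, i.e. `f ≡ g₁h₁+...+g_rh_r mod I` with the `gᵢ, hᵢ` forms of
strictly lower positive degree. -/
def StrLE {K : Type u} {σ : Type v} [CommRing K] (I : Ideal (MvPolynomial σ K)) (d : ℕ)
    (f : MvPolynomial σ K) (r : ℕ) : Prop :=
  ∃ g h : Fin r → MvPolynomial σ K,
    (∀ t, ∃ a, 0 < a ∧ a < d ∧ (g t).IsHomogeneous a) ∧
    (∀ t, ∃ b, 0 < b ∧ b < d ∧ (h t).IsHomogeneous b) ∧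
    f - ∑ t, g t * h t ∈ I

/-- The relative strength of a degree-`d` form `f` modulo the ideal `I`, as an
extended natural number (`⊤` if no decomposition exists, e.g. for linear forms). -/
noncomputable def relStrength {K : Type u} {σ : Type v} [CommRing K]
    (I : Ideal (MvPolynomial σ K)) (d : ℕ) (f : MvPolynomial σ K) : ℕ∞ :=
  ⨅ r : {r : ℕ // StrLE I d f r}, (r.1 : ℕ∞)

/-- The collective relative strength of the forms `f 0, ..., f (s-1)` (all of degree `d`)
modulo the ideal `I`: the minimum over nonzero coefficient tuples of the relative strength
of the corresponding linear combination. -/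
noncomputable def relStrengthFam {K : Type u} {σ : Type v} [CommRing K]
    (I : Ideal (MvPolynomial σ K)) (d s : ℕ) (f : ℕ → MvPolynomial σ K) : ℕ∞ :=
  ⨅ a : {a : ℕ → K // ∃ j < s, a j ≠ 0},
    relStrength I d (∑ j ∈ Finset.range s, MvPolynomial.C (a.1 j) * f j)

/-- A tower of forms: `h` layers; layer `i < h` consists of the forms
`form i j` for `j < size i`, all of degree `deg i`. -/
structure Tower (K : Type u) [CommRing K] (σ : Type v) where
  h : ℕ
  deg : ℕ → ℕ
  size : ℕ → ℕ
  form : ℕ → ℕ → MvPolynomial σ K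

namespace Tower

variable {K : Type u} {L : Type w} {σ : Type v} [CommRing K]

/-- All forms of the tower are homogeneous of the degree of their layer. -/
def IsHomog (F : Tower K σ) : Prop :=
  ∀ i < F.h, ∀ j < F.size i, (F.form i j).IsHomogeneous (F.deg i)

/-- The ideal generated by the layers below layer `i`. -/
noncomputable def lowerIdeal (F : Tower K σ) (i : ℕ) : Ideal (MvPolynomial σ K) :=
  Ideal.span {p | ∃ i' < i, ∃ j < F.size i', p = F.form i' j}

/-- The ideal generated by all forms of the tower. -/
noncomputable def idealOfAll (F : Tower K σ) : Ideal (MvPolynomial σ K) := F.lowerIdeal F.h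

/-- `s_i + s_{i+1} + ... + s_h`. -/
def tailSize (F : Tower K σ) (i : ℕ) : ℕ := ∑ i' ∈ Finset.Ico i F.h, F.size i'

/-- The total number of forms in the tower. -/
def totalSize (F : Tower K σ) : ℕ := F.tailSize 0

/-- The tower is `(A,B,r)`-strong relative to an ambient ideal `J`: for each layer `i`,
the collective relative strength of layer `i` modulo `J` and the lower layers
exceeds `A(s_i+...+s_h+r)^B`. -/
def IsStrongOver (J : Ideal (MvPolynomial σ K)) (F : Tower K σ) (A B r : ℕ) : Prop :=
  ∀ i < F.h, ((A * (F.tailSize i + r) ^ B : ℕ) : ℕ∞) <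
    relStrengthFam (J ⊔ F.lowerIdeal i) (F.deg i) (F.size i) (F.form i)

/-- The tower is `(A,B,r)`-strong. -/
def IsStrong (F : Tower K σ) (A B r : ℕ) : Prop := F.IsStrongOver ⊥ A B r

/-- The tower obtained by applying a ring homomorphism to all coefficients. -/
noncomputable def map [CommRing L] (φ : K →+* L) (F : Tower K σ) : Tower L σ where
  h := F.h
  deg := F.deg
  size := F.size
  form := fun i j => MvPolynomial.map φ (F.form i j)

/-- The tower is absolutely `(A,B,r)`-strong: it is `(A,B,r)`-strong after extending
scalars to an algebraic closure. -/
def AbsStrong {K : Type u} [Field K] (F : Tower K σ) (A B r : ℕ) : Prop :=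
  (F.map (algebraMap K (AlgebraicClosure K))).IsStrong A B r

/-- The tower obtained by placing the layers of `G` above those of `F`. -/
def append (F G : Tower K σ) : Tower K σ where
  h := F.h + G.h
  deg := fun i => if i < F.h then F.deg i else G.deg (i - F.h)
  size := fun i => if i < F.h then F.size i else G.size (i - F.h)
  form := fun i => if i < F.h then F.form i else G.form (i - F.h)

/-- The common zero locus of all forms of the tower. -/
def zeroSet (F : Tower K σ) : Set (σ → K) :=
  {x | ∀ i < F.h, ∀ j < F.size i, MvPolynomial.eval x (F.form i j) = 0}

/-- The `K`-rational points of `Z(F)` are Zariski dense in `Z(F)` (taken over an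
algebraic closure of `K`): every polynomial vanishing on the image of the `K`-rational
zeros vanishes on all of `Z(F)`. -/
def KPointsDense {K : Type u} [Field K] (F : Tower K σ) : Prop :=
  ∀ p : MvPolynomial σ (AlgebraicClosure K),
    (∀ y ∈ F.zeroSet, MvPolynomial.eval (fun t => algebraMap K (AlgebraicClosure K) (y t)) p = 0) →
    ∀ x ∈ (F.map (algebraMap K (AlgebraicClosure K))).zeroSet, MvPolynomial.eval x p = 0

end Tower

/-- The codimension (height) of the Zariski-closed set cut out by an ideal: the infimum
of the heights of the primes containing it. -/
noncomputable def idealCodim {R : Type u} [CommRing R] (I : Ideal R) : ℕ∞ :=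
  ⨅ p : {p : PrimeSpectrum R // I ≤ p.asIdeal}, Order.height p.1

/-!
Start from the tower whose layer `i` holds the `f`s of degree `i + 1`. While some layer `i` is
not strong, some nonzero combination `c` of its forms is, modulo the lower layers, a sum of at
most `ρ = C (s_i + ⋯ + s_d + r)^D` products `g_t h_t`. Remove a form with nonzero coefficient
from layer `i` and add one factor of each product to the lower layers: the ideal can only grow,
since that form is recovered from `c` and the other forms of its layer. When all degrees are odd
the added factor can be taken of odd degree, because a product of two even-degree forms has no
degree-`(i + 1)` part. Each step lowers the potential `∑ w (deg p)`, where the weights are chosen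
so that `w (i + 1) > ρ w i` as long as the potential stays below `s · w d`, a bound for its
initial value; this gives termination, and `w d` is polynomial in `s + r` for fixed `C, D, d`.
-/

open MvPolynomial Finset

section PairSets

variable {K : Type u} {σ : Type v} [CommRing K]

open scoped Classical in
noncomputable def layer (S : Finset (ℕ × MvPolynomial σ K)) (i : ℕ) : Finset (MvPolynomial σ K) :=
  (S.filter (·.1 = i)).image Prod.snd

lemma mem_layer {S : Finset (ℕ × MvPolynomial σ K)} {i : ℕ} {p : MvPolynomial σ K} :
    p ∈ layer S i ↔ (i, p) ∈ S := by
  simp [layer]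

noncomputable def spanForms (S : Finset (ℕ × MvPolynomial σ K)) : Ideal (MvPolynomial σ K) :=
  Ideal.span (Prod.snd '' (S : Set (ℕ × MvPolynomial σ K)))

def potential (w : ℕ → ℕ) (S : Finset (ℕ × MvPolynomial σ K)) : ℕ :=
  ∑ x ∈ S, w (x.1 + 1)

def IsAdmissible (A : Set ℕ) (e : ℕ) (S : Finset (ℕ × MvPolynomial σ K)) : Prop :=
  ∀ x ∈ S, x.1 + 1 < e ∧ x.1 + 1 ∈ A ∧ x.2.IsHomogeneous (x.1 + 1)

lemma potential_union_le [DecidableEq (ℕ × MvPolynomial σ K)] (w : ℕ → ℕ)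
    (S N : Finset (ℕ × MvPolynomial σ K)) :
    potential w (S ∪ N) ≤ potential w S + potential w N :=
  (Nat.le_add_right _ _).trans_eq sum_union_inter

lemma isAdmissible_image {ι : Type*} [Fintype ι] [DecidableEq (ℕ × MvPolynomial σ K)]
    {A : Set ℕ} {d : ℕ} {f : ι → MvPolynomial σ K} {df : ι → ℕ}
    (hdf : ∀ i, 0 < df i ∧ df i ≤ d ∧ (f i).IsHomogeneous (df i)) (hA : ∀ i, df i ∈ A) :
    IsAdmissible A (d + 1) (univ.image fun i => (df i - 1, f i)) := by
  simp only [IsAdmissible, mem_image, mem_univ, true_and]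
  rintro _ ⟨i, rfl⟩
  obtain ⟨hi0, hid, hfi⟩ := hdf i
  rw [Nat.sub_add_cancel hi0]
  exact ⟨by omega, hA i, hfi⟩

end PairSets

namespace Tower

variable {K : Type u} {σ : Type v} [CommRing K]

/-- A finite set `S` of `(layer, form)` pairs read as a tower of degree `(1, ..., d)`: layer `i`
consists of the forms `p` with `(i, p) ∈ S`, listed in some order. -/
noncomputable def ofFinset (d : ℕ) (S : Finset (ℕ × MvPolynomial σ K)) : Tower K σ where
  h := d
  deg i := i + 1
  size i := #(layer S i)
  form i j := (layer S i).toList.getD j 0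

variable {d : ℕ} {S : Finset (ℕ × MvPolynomial σ K)} {i : ℕ}

lemma ofFinset_form_mem {j : ℕ} (hj : j < (ofFinset d S).size i) :
    (i, (ofFinset d S).form i j) ∈ S := by
  have hj' : j < (layer S i).toList.length := by simpa [ofFinset] using hj
  rw [← mem_layer, show (ofFinset d S).form i j = _ from List.getD_eq_getElem _ _ hj', ← mem_toList]
  exact List.getElem_mem hj'

lemma exists_ofFinset_form_eq {p : MvPolynomial σ K} (hp : (i, p) ∈ S) :
    ∃ j < (ofFinset d S).size i, (ofFinset d S).form i j = p := by
  obtain ⟨j, hj, rfl⟩ := List.getElem_of_mem (mem_toList.2 (mem_layer.2 hp))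
  exact ⟨j, by simpa [ofFinset] using hj, List.getD_eq_getElem _ _ hj⟩

lemma ofFinset_form_injOn {j j' : ℕ} (hj : j < (ofFinset d S).size i)
    (hj' : j' < (ofFinset d S).size i) (h : (ofFinset d S).form i j = (ofFinset d S).form i j') :
    j = j' := by
  have hj₁ : j < (layer S i).toList.length := by simpa [ofFinset] using hj
  have hj₁' : j' < (layer S i).toList.length := by simpa [ofFinset] using hj'
  change (layer S i).toList.getD j 0 = (layer S i).toList.getD j' 0 at h
  rw [List.getD_eq_getElem _ _ hj₁, List.getD_eq_getElem _ _ hj₁'] at h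
  exact (nodup_toList _).getElem_inj_iff.1 h

lemma lowerIdeal_ofFinset :
    (ofFinset d S).lowerIdeal i = Ideal.span (Prod.snd '' {x | x ∈ S ∧ x.1 < i}) := by
  rw [lowerIdeal]
  congr 1
  ext p
  constructor
  · rintro ⟨k, hk, j, hj, rfl⟩
    exact ⟨_, ⟨ofFinset_form_mem hj, hk⟩, rfl⟩
  · rintro ⟨x, ⟨hx, hxi⟩, rfl⟩
    obtain ⟨j, hj, hjx⟩ := exists_ofFinset_form_eq (d := d) hx
    exact ⟨x.1, hxi, j, hj, hjx.symm⟩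

lemma idealOfAll_ofFinset (hS : ∀ x ∈ S, x.1 < d) :
    (ofFinset d S).idealOfAll = spanForms S := by
  rw [idealOfAll, lowerIdeal_ofFinset, spanForms]
  congr 2
  ext x
  exact ⟨And.left, fun hx => ⟨hx, hS x hx⟩⟩

lemma isHomog_ofFinset {A : Set ℕ} (hS : IsAdmissible A (d + 1) S) : (ofFinset d S).IsHomog :=
  fun _ _ _ hj => (hS _ (ofFinset_form_mem hj)).2.2

lemma tailSize_ofFinset_mul_le {w : ℕ → ℕ} (hw : Monotone w) :
    (ofFinset d S).tailSize i * w (i + 1) ≤ potential w S := by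
  classical
  calc (ofFinset d S).tailSize i * w (i + 1)
      ≤ ∑ k ∈ Ico i d, #{x ∈ S | x.1 = k} * w (i + 1) := by
        rw [tailSize, sum_mul]
        exact sum_le_sum fun k _ => Nat.mul_le_mul_right _ card_image_le
    _ ≤ ∑ k ∈ Ico i d, ∑ x ∈ S with x.1 = k, w (x.1 + 1) := by
        refine sum_le_sum fun k hk => ?_
        rw [← smul_eq_mul]
        refine card_nsmul_le_sum _ _ _ fun x hx => hw ?_
        rw [(mem_filter.1 hx).2]
        exact Nat.succ_le_succ (mem_Ico.1 hk).1
    _ ≤ ∑ x ∈ S, w (x.1 + 1) := sum_fiberwise_le_sum_of_sum_fiber_nonneg fun _ _ => Nat.zero_le _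

lemma totalSize_ofFinset_le {w : ℕ → ℕ} (hw : Monotone w) (hw₁ : 0 < w 1) :
    (ofFinset d S).totalSize ≤ potential w S :=
  (Nat.le_mul_of_pos_right _ hw₁).trans (tailSize_ofFinset_mul_le hw)

lemma size_ofFinset_eq_zero {A : Set ℕ} (hS : IsAdmissible A (d + 1) S) (hi : i + 1 ∉ A) :
    (ofFinset d S).size i = 0 :=
  card_eq_zero.2 (eq_empty_of_forall_notMem fun _ hp => hi (hS _ (mem_layer.1 hp)).2.1)

end Tower

section Spans

variable {K : Type u} {σ : Type v}

lemma exists_strLE_of_relStrengthFam_le [CommRing K] {I : Ideal (MvPolynomial σ K)}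
    {d s ρ : ℕ} {f : ℕ → MvPolynomial σ K} (h : relStrengthFam I d s f ≤ ρ) :
    ∃ a : ℕ → K, (∃ j < s, a j ≠ 0) ∧
      ∃ r ≤ ρ, StrLE I d (∑ j ∈ range s, C (a j) * f j) r := by
  have h' : relStrengthFam I d s f < (ρ + 1 : ℕ) := h.trans_lt (by exact_mod_cast ρ.lt_succ_self)
  obtain ⟨⟨a, ha⟩, hlt⟩ := iInf_lt_iff.1 h'
  obtain ⟨⟨r, hr⟩, hrlt⟩ := iInf_lt_iff.1 hlt
  exact ⟨a, ha, r, Nat.lt_succ_iff.1 (by exact_mod_cast hrlt), hr⟩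

lemma mem_span_insert_sum_of_ne_zero [Field K] (f : ℕ → MvPolynomial σ K) {a : ℕ → K}
    {s : Finset ℕ} {j : ℕ} (hj : j ∈ s) (ha : a j ≠ 0) :
    f j ∈ Ideal.span (insert (∑ k ∈ s, C (a k) * f k) (f '' ↑(s.erase j))) := by
  have hf : f j = C (a j)⁻¹ * ((∑ k ∈ s, C (a k) * f k) - ∑ k ∈ s.erase j, C (a k) * f k) := by
    rw [← add_sum_erase s _ hj, add_sub_cancel_right, ← mul_assoc, ← C_mul, inv_mul_cancel₀ ha,
      C_1, one_mul]
  rw [hf]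
  refine Ideal.mul_mem_left _ _ (Ideal.sub_mem _ (Ideal.subset_span (Set.mem_insert _ _)) ?_)
  exact Ideal.sum_mem _ fun k hk =>
    Ideal.mul_mem_left _ _ (Ideal.subset_span (Set.mem_insert_of_mem _ ⟨k, hk, rfl⟩))

lemma homogeneousComponent_mem_span [CommRing K] {X : Set (MvPolynomial σ K)}
    (hX : ∀ p ∈ X, ∃ m, p.IsHomogeneous m) {q : MvPolynomial σ K} (hq : q ∈ Ideal.span X)
    (n : ℕ) : homogeneousComponent n q ∈ Ideal.span X := by
  let := gradedAlgebra (σ := σ) (R := K)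
  refine homogeneousComponent_mem_of_mem (Ideal.homogeneous_span _ X fun p hp => ?_) hq n
  obtain ⟨m, hm⟩ := hX p hp
  exact ⟨m, (mem_homogeneousSubmodule _ _).2 hm⟩

end Spans

section Factors

variable {K : Type u} {σ : Type v} [CommRing K] {A : Set ℕ} {e : ℕ}

/-- If `e = a + b`, one of `a, b` lies in `A`; otherwise the degree-`e` part of `g * h` is zero. -/
lemma exists_factor_of_mul (hA : ∀ a b, a + b ∈ A → a ∈ A ∨ b ∈ A) (he : e ∈ A)
    {g h : MvPolynomial σ K} (hg : ∃ a, 0 < a ∧ a < e ∧ g.IsHomogeneous a)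
    (hh : ∃ b, 0 < b ∧ b < e ∧ h.IsHomogeneous b) :
    ∃ Q : Finset (ℕ × MvPolynomial σ K), #Q ≤ 1 ∧ IsAdmissible A e Q ∧
      homogeneousComponent e (g * h) ∈ spanForms Q := by
  classical
  obtain ⟨a, ha0, hae, hg⟩ := hg
  obtain ⟨b, hb0, hbe, hh⟩ := hh
  rw [homogeneousComponent_of_mem ((mem_homogeneousSubmodule _ _).2 (hg.mul hh))]
  by_cases hab : e = a + b
  · rw [if_pos hab]
    rcases hA a b (hab ▸ he) with haA | hbA
    · refine ⟨{(a - 1, g)}, card_singleton _ |>.le, ?_, ?_⟩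
      · simp only [mem_singleton, forall_eq, IsAdmissible, Nat.sub_add_cancel ha0]
        exact ⟨hae, haA, hg⟩
      · simpa [spanForms] using Ideal.mul_mem_right h _ (Ideal.mem_span_singleton_self g)
    · refine ⟨{(b - 1, h)}, card_singleton _ |>.le, ?_, ?_⟩
      · simp only [mem_singleton, forall_eq, IsAdmissible, Nat.sub_add_cancel hb0]
        exact ⟨hbe, hbA, hh⟩
      · simpa [spanForms] using Ideal.mul_mem_left _ g (Ideal.mem_span_singleton_self h)
  · rw [if_neg hab]
    exact ⟨∅, by simp, by simp [IsAdmissible], zero_mem _⟩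

lemma exists_factors_of_strLE (hA : ∀ a b, a + b ∈ A → a ∈ A ∨ b ∈ A) (he : e ∈ A)
    {X : Set (MvPolynomial σ K)} (hX : ∀ p ∈ X, ∃ m, p.IsHomogeneous m)
    {c : MvPolynomial σ K} (hc : c.IsHomogeneous e) {r : ℕ} (hcr : StrLE (Ideal.span X) e c r) :
    ∃ N : Finset (ℕ × MvPolynomial σ K), #N ≤ r ∧ IsAdmissible A e N ∧
      c ∈ Ideal.span (X ∪ Prod.snd '' (N : Set (ℕ × MvPolynomial σ K))) := by
  classical
  obtain ⟨g, h, hg, hh, hmem⟩ := hcr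
  choose Q hQcard hQ hQspan using fun t => exists_factor_of_mul hA he (hg t) (hh t)
  refine ⟨univ.biUnion Q, card_biUnion_le.trans ?_, ?_, ?_⟩
  · simpa using sum_le_card_nsmul univ (fun t => #(Q t)) 1 fun t _ => hQcard t
  · intro x hx
    obtain ⟨t, -, hxt⟩ := mem_biUnion.1 hx
    exact hQ t x hxt
  have hcomp := homogeneousComponent_mem_span hX hmem e
  rw [map_sub, homogeneousComponent_of_mem ((mem_homogeneousSubmodule _ _).2 hc), if_pos rfl,
    map_sum] at hcomp
  rw [← sub_add_cancel c (∑ t, homogeneousComponent e (g t * h t))]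
  refine Ideal.add_mem _ (Ideal.span_mono Set.subset_union_left hcomp) ?_
  refine Ideal.sum_mem _ fun t _ => Ideal.span_mono ?_ (hQspan t)
  refine Set.subset_union_of_subset_right (Set.image_mono fun x hx => ?_) _
  exact mem_biUnion.2 ⟨t, mem_univ t, hx⟩

end Factors

lemma Ideal.span_image_le_span_image_erase_union {ι R : Type*} [DecidableEq ι] [CommSemiring R]
    (f : ι → R) {S N : Finset ι} {x : ι} (hx : f x ∈ Ideal.span (f '' ↑(S.erase x ∪ N))) :
    Ideal.span (f '' ↑S) ≤ Ideal.span (f '' ↑(S.erase x ∪ N)) := by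
  refine Ideal.span_le.2 ?_
  rintro _ ⟨y, hy, rfl⟩
  by_cases hyx : y = x
  · exact hyx ▸ hx
  · exact Ideal.subset_span ⟨y, mem_union_left _ (mem_erase.2 ⟨hyx, hy⟩), rfl⟩

section Regularization

variable {K : Type u} {σ : Type v} [Field K] {d C D r P : ℕ} {A : Set ℕ} {w : ℕ → ℕ}
  {S : Finset (ℕ × MvPolynomial σ K)}

open scoped Classical in
lemma exists_weak_layer (hS : IsAdmissible A (d + 1) S)
    (hweak : ¬ (Tower.ofFinset d S).IsStrong C D r) :
    ∃ i < d, ∃ p c : MvPolynomial σ K, (i, p) ∈ S ∧ c.IsHomogeneous (i + 1) ∧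
      p ∈ Ideal.span (insert c (Prod.snd '' (S.erase (i, p) : Set (ℕ × MvPolynomial σ K)))) ∧
      ∃ r' ≤ C * ((Tower.ofFinset d S).tailSize i + r) ^ D,
        StrLE (Ideal.span (Prod.snd '' {x | x ∈ S ∧ x.1 < i})) (i + 1) c r' := by
  classical
  simp only [Tower.IsStrong, Tower.IsStrongOver, not_forall, not_lt] at hweak
  obtain ⟨i, hi, hle⟩ := hweak
  obtain ⟨a, ⟨j, hj, haj⟩, r', hr', hstr⟩ := exists_strLE_of_relStrengthFam_le hle
  set T := Tower.ofFinset d S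
  have hform : ∀ {k}, k < T.size i → (i, T.form i k) ∈ S := Tower.ofFinset_form_mem
  refine ⟨i, hi, T.form i j, ∑ k ∈ range (T.size i), MvPolynomial.C (a k) * T.form i k,
    hform hj, ?_, ?_, r', hr', ?_⟩
  · exact IsHomogeneous.sum _ _ _ fun k hk => (hS _ (hform (mem_range.1 hk))).2.2.C_mul _
  · have hmem := mem_span_insert_sum_of_ne_zero (T.form i) (mem_range.2 hj) haj
    refine Ideal.span_mono (Set.insert_subset_insert ?_) hmem
    rintro _ ⟨k, hk, rfl⟩
    obtain ⟨hkj, hk⟩ := mem_erase.1 hk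
    refine ⟨_, mem_erase.2 ⟨fun h => hkj ?_, hform (mem_range.1 hk)⟩, rfl⟩
    exact Tower.ofFinset_form_injOn (mem_range.1 hk) hj (Prod.ext_iff.1 h).2
  · rwa [bot_sup_eq, Tower.lowerIdeal_ofFinset] at hstr

lemma exists_step (hA : ∀ a b, a + b ∈ A → a ∈ A ∨ b ∈ A) (hw : Monotone w)
    (hkey : ∀ i < d, ∀ t, t * w (i + 1) ≤ P → C * (t + r) ^ D * w i < w (i + 1))
    (hS : IsAdmissible A (d + 1) S) (hP : potential w S ≤ P)
    (hweak : ¬ (Tower.ofFinset d S).IsStrong C D r) :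
    ∃ S', IsAdmissible A (d + 1) S' ∧ potential w S' < potential w S ∧
      spanForms S ≤ spanForms S' := by
  classical
  obtain ⟨i, hi, p, c, hp, hc, hpc, r', hr', hstr⟩ := exists_weak_layer hS hweak
  have hX : ∀ q ∈ Prod.snd '' {x | x ∈ S ∧ x.1 < i}, ∃ m, q.IsHomogeneous m := by
    rintro _ ⟨x, ⟨hx, -⟩, rfl⟩
    exact ⟨_, (hS x hx).2.2⟩
  obtain ⟨N, hN, hNA, hcN⟩ := exists_factors_of_strLE hA (hS _ hp).2.1 hX hc hstr
  refine ⟨S.erase (i, p) ∪ N, ?_, ?_, ?_⟩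
  · intro x hx
    rcases mem_union.1 hx with hx | hx
    · exact hS x (mem_of_mem_erase hx)
    · obtain ⟨hxi, hxA, hxh⟩ := hNA x hx
      exact ⟨by omega, hxA, hxh⟩
  · have hpotN : potential w N ≤ r' * w i := by
      refine (sum_le_card_nsmul N _ (w i) fun x hx => hw ?_).trans ?_
      · exact Nat.lt_succ_iff.1 (hNA x hx).1
      · exact Nat.mul_le_mul_right _ hN
    have htail := (Tower.tailSize_ofFinset_mul_le (d := d) (S := S) (i := i) hw).trans hP
    calc potential w (S.erase (i, p) ∪ N)
        ≤ potential w (S.erase (i, p)) + r' * w i :=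
          (potential_union_le w _ _).trans (Nat.add_le_add_left hpotN _)
      _ < potential w (S.erase (i, p)) + w (i + 1) :=
          Nat.add_lt_add_left ((Nat.mul_le_mul_right _ hr').trans_lt (hkey i hi _ htail)) _
      _ = potential w S := sum_erase_add _ _ hp
  · refine Ideal.span_image_le_span_image_erase_union Prod.snd
      (Ideal.span_le.2 (Set.insert_subset ?_ ?_) hpc)
    · refine Ideal.span_mono (Set.union_subset ?_ (Set.image_mono ?_)) hcN
      · rintro _ ⟨x, ⟨hx, hxi⟩, rfl⟩
        exact ⟨x, mem_union_left _ (mem_erase.2 ⟨fun h => by simp [h] at hxi, hx⟩), rfl⟩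
      · exact fun x hx => mem_union_right _ hx
    · exact Ideal.subset_span.trans' (Set.image_mono fun x hx => mem_union_left _ hx)

theorem exists_isStrong_ofFinset (hA : ∀ a b, a + b ∈ A → a ∈ A ∨ b ∈ A) (hw : Monotone w)
    (hkey : ∀ i < d, ∀ t, t * w (i + 1) ≤ P → C * (t + r) ^ D * w i < w (i + 1))
    (hS : IsAdmissible A (d + 1) S) (hP : potential w S ≤ P) :
    ∃ S', IsAdmissible A (d + 1) S' ∧ (Tower.ofFinset d S').IsStrong C D r ∧
      potential w S' ≤ potential w S ∧
      spanForms S ≤ spanForms S' := by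
  induction hφ : potential w S using Nat.strong_induction_on generalizing S with
  | _ n ih =>
  by_cases hstrong : (Tower.ofFinset d S).IsStrong C D r
  · exact ⟨S, hS, hstrong, hφ.le, le_rfl⟩
  obtain ⟨S₁, hS₁, hlt, hspan₁⟩ := exists_step hA hw hkey hS hP hstrong
  obtain ⟨S₂, hS₂, hstrong₂, hpot₂, hspan₂⟩ := ih _ (hφ ▸ hlt) hS₁ (hlt.le.trans hP) rfl
  exact ⟨S₂, hS₂, hstrong₂, hpot₂.trans (hφ ▸ hlt.le), hspan₁.trans hspan₂⟩

end Regularization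

section Weights

variable (C D s r : ℕ)

def budget : ℕ → ℕ
  | 0 => 1
  | m + 1 => budget m * (C * (s * budget m + r) ^ D + 1)

/-- The factors are chosen so that `weight d e * budget (d - e) = budget d`. -/
def weight (d e : ℕ) : ℕ :=
  ∏ m ∈ range e, (C * (s * budget C D s r (d - 1 - m) + r) ^ D + 1)

variable {C D s r}

lemma budget_pos (m : ℕ) : 0 < budget C D s r m := by
  induction m with
  | zero => exact Nat.one_pos
  | succ m ih => exact Nat.mul_pos ih (Nat.succ_pos _)

lemma weight_pos (d e : ℕ) : 0 < weight C D s r d e :=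
  prod_pos fun _ _ => Nat.succ_pos _

lemma weight_succ (d e : ℕ) :
    weight C D s r d (e + 1) =
      weight C D s r d e * (C * (s * budget C D s r (d - 1 - e) + r) ^ D + 1) :=
  prod_range_succ _ _

lemma weight_mono (d : ℕ) : Monotone (weight C D s r d) :=
  monotone_nat_of_le_succ fun e => by
    rw [weight_succ]
    exact Nat.le_mul_of_pos_right _ (Nat.succ_pos _)

lemma weight_mul_budget {d e : ℕ} (he : e ≤ d) :
    weight C D s r d e * budget C D s r (d - e) = budget C D s r d := by
  induction e with
  | zero => simp [weight]
  | succ e ih =>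
    rw [weight_succ, ← ih (by omega), show d - e = d - 1 - e + 1 by omega, budget,
      show d - (e + 1) = d - 1 - e by omega]
    ring

lemma weight_le_budget {d e : ℕ} (he : e ≤ d) : weight C D s r d e ≤ budget C D s r d :=
  (Nat.le_mul_of_pos_right _ (budget_pos _)).trans_eq (weight_mul_budget he)

lemma mul_pow_mul_weight_lt_weight {d i t : ℕ} (hi : i < d)
    (ht : t * weight C D s r d (i + 1) ≤ s * budget C D s r d) :
    C * (t + r) ^ D * weight C D s r d i < weight C D s r d (i + 1) := by
  have ht' : t ≤ s * budget C D s r (d - 1 - i) := by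
    rw [← weight_mul_budget (show i + 1 ≤ d by omega), show d - (i + 1) = d - 1 - i by omega,
      mul_comm (weight _ _ _ _ _ _), ← mul_assoc] at ht
    exact Nat.le_of_mul_le_mul_right ht (weight_pos _ _)
  rw [weight_succ, mul_add_one, mul_comm (weight _ _ _ _ _ _)]
  calc C * (t + r) ^ D * weight C D s r d i
      ≤ C * (s * budget C D s r (d - 1 - i) + r) ^ D * weight C D s r d i := by gcongr
    _ < _ := Nat.lt_add_of_pos_right (weight_pos d i)

lemma mul_budget_le_pow {X : ℕ} (hC : C + 1 ≤ X) (hsr : s + r ≤ X) (m : ℕ) :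
    X * budget C D s r m ≤ X ^ (D + 2) ^ m := by
  induction m with
  | zero => simp [budget]
  | succ m ih =>
    set b := budget C D s r m
    have hb : 0 < b := budget_pos m
    have hN : 1 ≤ (D + 2) ^ m := Nat.one_le_pow _ _ (by omega)
    have hsb : s * b + r ≤ X * b := by nlinarith
    have hfactor : C * (s * b + r) ^ D + 1 ≤ X * (X * b) ^ D := by
      have : 1 ≤ (X * b) ^ D := Nat.one_le_pow _ _ (Nat.mul_pos (by omega) hb)
      calc C * (s * b + r) ^ D + 1 ≤ C * (X * b) ^ D + (X * b) ^ D := by gcongr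
        _ = (C + 1) * (X * b) ^ D := by ring
        _ ≤ X * (X * b) ^ D := by gcongr
    calc X * budget C D s r (m + 1) = X * b * (C * (s * b + r) ^ D + 1) := by rw [budget, mul_assoc]
      _ ≤ X * b * (X * (X * b) ^ D) := by gcongr
      _ = X * (X * b) ^ (D + 1) := by ring
      _ ≤ X * (X ^ (D + 2) ^ m) ^ (D + 1) := by gcongr
      _ = X ^ (1 + (D + 2) ^ m * (D + 1)) := by rw [← pow_mul, ← pow_succ']; ring_nf
      _ ≤ X ^ (D + 2) ^ (m + 1) := by
          refine Nat.pow_le_pow_right (by omega) ?_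
          rw [pow_succ]
          nlinarith

lemma mul_budget_le (d : ℕ) :
    s * budget C D s r d ≤ (2 * (C + 1)) ^ (D + 2) ^ d * (s + r) ^ (D + 2) ^ d := by
  rcases Nat.eq_zero_or_pos (s + r) with h | h
  · simp [show s = 0 by omega]
  · rw [← mul_pow]
    refine le_trans ?_ (mul_budget_le_pow (C := C) (D := D) (s := s) (r := r)
      (by nlinarith) (by nlinarith) d)
    gcongr
    nlinarith

end Weights

lemma imp_odd_or_imp_odd_of_imp_odd_add {P : Prop} {a b : ℕ} (h : P → Odd (a + b)) :
    (P → Odd a) ∨ (P → Odd b) :=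
  (em (Odd a)).imp (fun ha _ => ha) fun _ hP => by grind [Nat.odd_add]

theorem stmt_5_general (C D : ℕ) (d : ℕ) :
    ∃ E F' : ℕ, ∀ (K : Type) [Field K] (n s : ℕ)
      (f : Fin s → MvPolynomial (Fin n) K) (df : Fin s → ℕ),
      (∀ i, 0 < df i ∧ df i ≤ d ∧ (f i).IsHomogeneous (df i)) →
      ∀ r : ℕ,
      ∃ T : Tower K (Fin n), T.IsHomog ∧ T.h = d ∧ (∀ i < d, T.deg i = i + 1) ∧
        T.IsStrong C D r ∧ T.totalSize ≤ E * (s + r) ^ F' ∧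
        Ideal.span (Set.range f) ≤ T.idealOfAll ∧
        ((∀ i, Odd (df i)) → ∀ i < T.h, Even (T.deg i) → T.size i = 0) := by
  classical
  refine ⟨(2 * (C + 1)) ^ (D + 2) ^ d, (D + 2) ^ d, fun K _ n s f df hdf r => ?_⟩
  let A : Set ℕ := {m | (∀ i, Odd (df i)) → Odd m}
  let S₀ := univ.image fun i => (df i - 1, f i)
  have hS₀ : IsAdmissible A (d + 1) S₀ := isAdmissible_image hdf fun i hall => hall i
  have hP : potential (weight C D s r d) S₀ ≤ s * budget C D s r d := by
    refine (sum_le_card_nsmul _ _ _ fun x hx => weight_le_budget ?_).trans ?_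
    · exact Nat.lt_succ_iff.1 (hS₀ x hx).1
    · exact Nat.mul_le_mul_right _ (card_image_le.trans_eq (card_fin s))
  obtain ⟨S, hS, hstrong, hpot, hspan⟩ :=
    exists_isStrong_ofFinset (A := A) (fun _ _ => imp_odd_or_imp_odd_of_imp_odd_add) (weight_mono d)
      (fun _ hi _ ht => mul_pow_mul_weight_lt_weight hi ht) hS₀ hP
  refine ⟨Tower.ofFinset d S, Tower.isHomog_ofFinset hS, rfl, fun _ _ => rfl, hstrong, ?_, ?_, ?_⟩
  · exact (Tower.totalSize_ofFinset_le (weight_mono d) (weight_pos d 1)).trans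
      ((hpot.trans hP).trans (mul_budget_le d))
  · rw [Tower.idealOfAll_ofFinset fun x hx => Nat.succ_lt_succ_iff.1 (hS x hx).1]
    refine (Ideal.span_le.2 ?_).trans hspan
    rintro _ ⟨i, rfl⟩
    exact Ideal.subset_span ⟨_, mem_image_of_mem _ (mem_univ i), rfl⟩
  · exact fun hall i _ heven =>
      Tower.size_ofFinset_eq_zero hS fun hodd => Nat.not_even_iff_odd.2 (hodd hall) heven

/-- (Relative regularization.) Given constants `C, D` and `d ≥ 1` there
exist constants `E, F'` such that: for any field `K`, homogeneous `f 1, ..., f s` of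
positive degrees at most `d`, and any `r ≥ 0`, there is a `(C, D, r)`-strong tower `T` of
degree `(1, 2, ..., d)` of total size at most `E·(s+r)^F'` whose ideal contains the ideal
`(f_1, ..., f_s)`; moreover if all the `f i` have odd degree, `T` may be chosen to consist
only of forms of odd degree (its even-degree layers are empty). -/
theorem stmt_5 (C D : ℕ) (d : ℕ) (hd : 1 ≤ d) :
    ∃ E F' : ℕ, ∀ (K : Type) [Field K] (n s : ℕ)
      (f : Fin s → MvPolynomial (Fin n) K) (df : Fin s → ℕ),
      (∀ i, 0 < df i ∧ df i ≤ d ∧ (f i).IsHomogeneous (df i)) →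
      ∀ r : ℕ,
      ∃ T : Tower K (Fin n), T.IsHomog ∧ T.h = d ∧ (∀ i < d, T.deg i = i + 1) ∧
        T.IsStrong C D r ∧ T.totalSize ≤ E * (s + r) ^ F' ∧
        Ideal.span (Set.range f) ≤ T.idealOfAll ∧
        ((∀ i, Odd (df i)) → ∀ i < T.h, Even (T.deg i) → T.size i = 0) :=
  stmt_5_general C D d
end

section
/- Given constants A, B there exist constants C = C(A,B) and D = D(A,B) such that for every tower F of forms (with top layer of size s_h) and every r ≥ 0: if F is (C, D, r)-strong then F is (A(r+s_h)^B, B, A(r+s_h)^B)-strong. Moreover (with no hypothesis on C, D): if a tower F is (A, B, r+|G|)-strong and a tower G of forms, considered modulo the ideal generated by F, is (A, B, r)-strong, then the combined tower (F, G) obtained by placing the layers of G above those of F is (A, B, r)-strong. -/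
open MvPolynomial

/-!
Both parts are bookkeeping on the strength thresholds `A(s_i+⋯+s_h+r)^B`. For (i), since
`s_h ≤ s_i+⋯+s_h =: T`, the new threshold `A(r+s_h)^B (T + A(r+s_h)^B)^B` is at most
`A(A+1)^B (T+r)^(B(B+2))`, so `C = A(A+1)^B`, `D = B(B+2)` work. For (ii), a layer of `F`
inside the combined tower has the same lower ideal and tail `s_i+⋯+|G|`, while a layer of `G`
has lower ideal generated by all of `F` and the lower layers of `G`.
-/

lemma mul_pow_mul_add_mul_pow_pow_le (A B r s T : ℕ) (hsT : s ≤ T) :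
    A * (r + s) ^ B * (T + A * (r + s) ^ B) ^ B
      ≤ A * (A + 1) ^ B * (T + r) ^ (B * (B + 2)) := by
  rcases Nat.eq_zero_or_pos (T + r) with hN | hN
  · obtain ⟨rfl, rfl, rfl⟩ : T = 0 ∧ r = 0 ∧ s = 0 := by omega
    rcases B with _ | B <;> simp
  have hrs : A * (r + s) ^ B ≤ A * (T + r) ^ B :=
    Nat.mul_le_mul_left _ (Nat.pow_le_pow_left (by omega) B)
  have hsum : T + A * (r + s) ^ B ≤ (A + 1) * (T + r) ^ (B + 1) := by
    have hT : T ≤ (T + r) ^ (B + 1) := (Nat.le_add_right T r).trans (Nat.le_self_pow (by omega) _)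
    have hA : A * (T + r) ^ B ≤ A * (T + r) ^ (B + 1) :=
      Nat.mul_le_mul_left _ (Nat.pow_le_pow_right hN B.le_succ)
    linarith
  calc A * (r + s) ^ B * (T + A * (r + s) ^ B) ^ B
      ≤ A * (T + r) ^ B * ((A + 1) * (T + r) ^ (B + 1)) ^ B :=
        Nat.mul_le_mul hrs (Nat.pow_le_pow_left hsum B)
    _ = A * (A + 1) ^ B * (T + r) ^ (B * (B + 2)) := by rw [mul_pow, ← pow_mul]; ring

namespace Tower

variable {K : Type*} {σ : Type*} [CommRing K]

lemma size_le_tailSize (F : Tower K σ) {i j : ℕ} (hij : i ≤ j) (hj : j < F.h) :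
    F.size j ≤ F.tailSize i :=
  Finset.single_le_sum (fun _ _ => Nat.zero_le _) (Finset.mem_Ico.mpr ⟨hij, hj⟩)

lemma IsStrongOver.of_threshold_le {J : Ideal (MvPolynomial σ K)} {F : Tower K σ}
    {A B r A' B' r' : ℕ} (hF : F.IsStrongOver J A' B' r')
    (hle : ∀ i < F.h, A * (F.tailSize i + r) ^ B ≤ A' * (F.tailSize i + r') ^ B') :
    F.IsStrongOver J A B r :=
  fun i hi => lt_of_le_of_lt (by exact_mod_cast hle i hi) (hF i hi)

lemma IsStrongOver.rescale {J : Ideal (MvPolynomial σ K)} {F : Tower K σ} {A B r : ℕ}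
    (hh : 0 < F.h) (hF : F.IsStrongOver J (A * (A + 1) ^ B) (B * (B + 2)) r) :
    F.IsStrongOver J (A * (r + F.size (F.h - 1)) ^ B) B (A * (r + F.size (F.h - 1)) ^ B) :=
  hF.of_threshold_le fun _ hi => mul_pow_mul_add_mul_pow_pow_le A B r _ _
    (F.size_le_tailSize (Nat.le_sub_one_of_lt hi) (Nat.sub_one_lt_of_lt hh))

section Append

variable (F G : Tower K σ)

@[simp] lemma append_h : (F.append G).h = F.h + G.h := rfl

lemma append_deg_of_lt {i : ℕ} (hi : i < F.h) : (F.append G).deg i = F.deg i := if_pos hi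

lemma append_size_of_lt {i : ℕ} (hi : i < F.h) : (F.append G).size i = F.size i := if_pos hi

lemma append_form_of_lt {i : ℕ} (hi : i < F.h) : (F.append G).form i = F.form i := if_pos hi

@[simp] lemma append_deg_add (k : ℕ) : (F.append G).deg (F.h + k) = G.deg k := by
  simp [append]

@[simp] lemma append_size_add (k : ℕ) : (F.append G).size (F.h + k) = G.size k := by
  simp [append]

@[simp] lemma append_form_add (k : ℕ) : (F.append G).form (F.h + k) = G.form k := by
  simp [append]

lemma append_tailSize_add (k : ℕ) : (F.append G).tailSize (F.h + k) = G.tailSize k := by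
  rw [tailSize, tailSize, append_h, add_comm F.h k, add_comm F.h G.h, ← Finset.sum_Ico_add]
  simp only [append_size_add]

lemma append_tailSize_of_le {i : ℕ} (hi : i ≤ F.h) :
    (F.append G).tailSize i = F.tailSize i + G.totalSize := by
  rw [tailSize, append_h, ← Finset.sum_Ico_consecutive _ hi (Nat.le_add_right F.h G.h)]
  congr 1
  · exact Finset.sum_congr rfl fun j hj => append_size_of_lt F G (Finset.mem_Ico.mp hj).2
  · exact append_tailSize_add F G 0

lemma append_lowerIdeal_of_le {i : ℕ} (hi : i ≤ F.h) :
    (F.append G).lowerIdeal i = F.lowerIdeal i := by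
  unfold lowerIdeal
  congr 1
  ext p
  refine exists_congr fun i' => and_congr_right fun hi' => ?_
  have hi'F : i' < F.h := hi'.trans_le hi
  simp only [append_size_of_lt F G hi'F, append_form_of_lt F G hi'F]

lemma append_lowerIdeal_add (k : ℕ) :
    (F.append G).lowerIdeal (F.h + k) = F.idealOfAll ⊔ G.lowerIdeal k := by
  rw [idealOfAll, lowerIdeal, lowerIdeal, lowerIdeal, ← Ideal.span_union]
  congr 1
  ext p
  constructor
  · rintro ⟨i', hi', hp⟩
    rcases lt_or_ge i' F.h with hi'F | hi'F
    · exact Or.inl ⟨i', hi'F, by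
        simpa only [append_size_of_lt F G hi'F, append_form_of_lt F G hi'F] using hp⟩
    · obtain ⟨k', rfl⟩ := Nat.exists_eq_add_of_le hi'F
      exact Or.inr ⟨k', by omega, by simpa only [append_size_add, append_form_add] using hp⟩
  · rintro (⟨i', hi', hp⟩ | ⟨k', hk', hp⟩)
    · exact ⟨i', by omega, by
        simpa only [append_size_of_lt F G hi', append_form_of_lt F G hi'] using hp⟩
    · exact ⟨F.h + k', by omega, by simpa only [append_size_add, append_form_add] using hp⟩

end Append

lemma IsStrongOver.append {J : Ideal (MvPolynomial σ K)} {F G : Tower K σ} {A B r : ℕ}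
    (hF : F.IsStrongOver J A B (r + G.totalSize))
    (hG : G.IsStrongOver (J ⊔ F.idealOfAll) A B r) : (F.append G).IsStrongOver J A B r := by
  intro i hi
  by_cases hiF : i < F.h
  · rw [append_tailSize_of_le F G hiF.le, append_lowerIdeal_of_le F G hiF.le,
      append_deg_of_lt F G hiF, append_size_of_lt F G hiF, append_form_of_lt F G hiF,
      add_assoc, add_comm G.totalSize]
    exact hF i hiF
  · obtain ⟨k, rfl⟩ : ∃ k, i = F.h + k := ⟨i - F.h, by omega⟩
    rw [append_tailSize_add, append_lowerIdeal_add, append_deg_add, append_size_add,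
      append_form_add, ← sup_assoc]
    exact hG k (by simp at hi; omega)

end Tower

/-- (i) Given `A, B` there exist `C, D` such that every `(C, D, r)`-strong
tower (with top layer of size `s_h`) is `(A(r+s_h)^B, B, A(r+s_h)^B)`-strong.
(ii) If a tower `F` is `(A, B, r+|G|)`-strong and a tower `G`, considered modulo the ideal
generated by `F`, is `(A, B, r)`-strong, then the combined tower obtained by placing the
layers of `G` above those of `F` is `(A, B, r)`-strong. -/
theorem stmt_6 (A B : ℕ) :
    ∃ C D : ℕ,
      (∀ (K : Type) [Field K] (σ : Type) (F : Tower K σ) (r : ℕ), 0 < F.h →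
        F.IsStrong C D r →
        F.IsStrong (A * (r + F.size (F.h - 1)) ^ B) B (A * (r + F.size (F.h - 1)) ^ B))
      ∧
      (∀ (K : Type) [Field K] (σ : Type) (F G : Tower K σ) (r : ℕ),
        F.IsStrong A B (r + G.totalSize) →
        G.IsStrongOver F.idealOfAll A B r →
        (F.append G).IsStrong A B r) :=
  ⟨A * (A + 1) ^ B, B * (B + 2), fun _ _ _ _ _ hh hF => hF.rescale hh,
    fun _ _ _ _ _ _ hF hG => hF.append (by rwa [bot_sup_eq])⟩
end

section
/- Let K be an algebraically closed field, d ≥ 2, s ≥ 1, and m ≥ d. Then there is a dense open subset of the space of s-tuples (f_1,...,f_s) of forms of degree d in m variables on which the (absolute) collective strength satisfies str(f_1,...,f_s) > (m - s)/(d·2^d). -/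
open MvPolynomial

/-- The `s`-tuple of degree-`d` forms in `m` variables determined by a coefficient
vector `c` (one coefficient for each pair of an index `i < s` and a monomial of degree `d`). -/
noncomputable def tupleOfCoeffs (K : Type u) [CommSemiring K] (m d s : ℕ)
    (c : Fin s × {μ // μ ∈ Finset.Nat.antidiagonalTuple m d} → K) :
    Fin s → MvPolynomial (Fin m) K :=
  fun i => ∑ μ ∈ (Finset.Nat.antidiagonalTuple m d).attach,
    MvPolynomial.C (c (i, μ)) * ∏ t : Fin m, MvPolynomial.X t ^ (μ.1 t)

/-!
If `∑ i, a i • f i` has strength at most `N` and `a j ≠ 0`, then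
`f j = ∑ t, g t * h t - ∑ i ≠ j, b i • f i` with all `g t`, `h t` of degree `< d`. So the
tuples of bounded collective strength lie in the union over `j` of the images of polynomial maps
from affine spaces of dimension `(s - 1) (A + 1) + 2 N B`, where `A` and `B` count the monomials
of degree `d` and of degree `< d`. As `d A = m B`, this dimension is `< s A` once
`2 d N + s ≤ m` (implied by `N ≤ (m - s) / (d 2^d)`), so the coordinates of each map are
algebraically dependent: a nonzero polynomial `q j` vanishes on its image, and `g = ∏ j, q j`.
-/

open Finset

theorem MvPolynomial.exists_ne_zero_forall_eval_eq_zero {K ι κ : Type*} [Field K]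
    [Fintype ι] [Fintype κ] (h : Fintype.card ι < Fintype.card κ)
    (P : κ → MvPolynomial ι K) :
    ∃ q : MvPolynomial κ K, q ≠ 0 ∧
      ∀ x : ι → K, eval (fun k => eval x (P k)) q = 0 := by
  have hdep : ¬ AlgebraicIndependent K P := by
    intro hind
    have hcard := hind.lift_cardinalMk_le_trdeg
    rw [MvPolynomial.trdeg_of_isDomain, Cardinal.lift_lift, Cardinal.mk_fintype,
      Cardinal.mk_fintype] at hcard
    simp only [Cardinal.lift_natCast, Nat.cast_le] at hcard
    omega
  rw [AlgebraicIndependent, injective_iff_map_eq_zero] at hdep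
  push Not at hdep
  obtain ⟨q, hq, hq0⟩ := hdep
  refine ⟨q, hq0, fun x => ?_⟩
  have heval : eval x (aeval P q) = eval (fun k => eval x (P k)) q := by
    clear hq hq0
    induction q using MvPolynomial.induction_on <;> simp_all
  rw [← heval, hq, map_zero]

theorem Nat.succ_mul_multichoose (m k : ℕ) :
    (k + 1) * m.multichoose (k + 1) = m * ∑ i ∈ range (k + 1), m.multichoose i := by
  rw [sum_range_multichoose, multichoose_eq, mul_comm, ← Nat.add_assoc, Nat.add_sub_cancel,
    Nat.choose_succ_right_eq, Nat.add_sub_cancel, mul_comm, add_comm k m, Nat.choose_symm_add]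

theorem Finset.Nat.card_antidiagonalTuple (m d : ℕ) :
    #(antidiagonalTuple m d) = m.multichoose d := by
  have h := card_finsuppAntidiag_nat_eq_multichoose (s := (univ : Finset (Fin m))) d
  rwa [card_univ, Fintype.card_fin, finsuppAntidiag, card_map, card_attach,
    piAntidiag_univ_fin_eq_antidiagonalTuple] at h

def monomialsDegreeLT (m d : ℕ) : Finset (Fin m →₀ ℕ) :=
  (range d).biUnion fun k => univ.finsuppAntidiag k

theorem mem_monomialsDegreeLT {m d : ℕ} {ν : Fin m →₀ ℕ} :
    ν ∈ monomialsDegreeLT m d ↔ ν.degree < d := by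
  simp [monomialsDegreeLT, mem_finsuppAntidiag, Finsupp.degree_eq_sum]

theorem card_monomialsDegreeLT (m d : ℕ) :
    #(monomialsDegreeLT m d) = ∑ k ∈ range d, m.multichoose k := by
  rw [monomialsDegreeLT, card_biUnion]
  · simp [card_finsuppAntidiag_nat_eq_multichoose]
  · intro k _ l _ hkl
    simp only [Function.onFun, disjoint_left, mem_finsuppAntidiag]
    grind

noncomputable def genericForm (K : Type*) [CommSemiring K] {ι : Type*} {m d : ℕ}
    (v : monomialsDegreeLT m d → ι) : MvPolynomial (Fin m) (MvPolynomial ι K) :=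
  ∑ ν, monomial ν.1 (X (v ν))

theorem map_eval_genericForm {K ι : Type*} [CommSemiring K] {m d : ℕ}
    (v : monomialsDegreeLT m d → ι) (x : ι → K) :
    map (eval x) (genericForm K v) = ∑ ν, monomial ν.1 (x (v ν)) := by
  simp [genericForm]

theorem sum_monomial_coeff_of_totalDegree_lt {K : Type*} [CommSemiring K] {m d : ℕ}
    {p : MvPolynomial (Fin m) K} (hp : p.totalDegree < d) :
    ∑ ν : monomialsDegreeLT m d, monomial ν.1 (coeff ν.1 p) = p := by
  have hsupp : p.support ⊆ monomialsDegreeLT m d := fun ν hν =>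
    mem_monomialsDegreeLT.2 ((le_totalDegree hν).trans_lt hp)
  rw [sum_coe_sort (monomialsDegreeLT m d) fun ν => monomial ν (coeff ν p), ← sum_subset hsupp,
    ← as_sum]
  intro ν _ hν
  rw [notMem_support_iff.1 hν, monomial_zero]

abbrev DegreeMonomials (m d : ℕ) : Type := {μ // μ ∈ Finset.Nat.antidiagonalTuple m d}

theorem coeff_tupleOfCoeffs {K : Type*} [CommSemiring K] {m d s : ℕ}
    (c : Fin s × DegreeMonomials m d → K) (i : Fin s) (μ : DegreeMonomials m d) :
    coeff (Finsupp.equivFunOnFinite.symm μ.1) (tupleOfCoeffs K m d s c i) = c (i, μ) := by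
  classical
  simp only [tupleOfCoeffs, coeff_sum, coeff_C_mul, coeff_prod_X_pow]
  rw [sum_eq_single_of_mem μ (mem_attach _ _)]
  · simp [Finsupp.ext_iff]
  · intro μ' _ hne
    have : Finsupp.equivFunOnFinite.symm μ.1 ≠ Finsupp.indicator univ fun t _ => μ'.1 t := by
      simpa [Finsupp.ext_iff, funext_iff, Subtype.ext_iff, eq_comm] using hne
    simp [this]

-- The coordinates `b i` and `c (i, μ)` for `i ≠ j` and the coefficients of `g t`, `h t`;
-- `decompMap` sends them to the coefficient vector of `f` with
-- `f j = ∑ t, g t * h t - ∑ i ≠ j, b i • f i`.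
abbrev DecompParams (m d s N : ℕ) (j : Fin s) : Type :=
  {i // i ≠ j} ⊕ ({i // i ≠ j} × DegreeMonomials m d) ⊕
    (Fin N × monomialsDegreeLT m d) ⊕ (Fin N × monomialsDegreeLT m d)

noncomputable def decompMap (K : Type*) [CommRing K] (m d s N : ℕ) (j : Fin s)
    (k : Fin s × DegreeMonomials m d) : MvPolynomial (DecompParams m d s N j) K :=
  if hk : k.1 = j then
    coeff (Finsupp.equivFunOnFinite.symm k.2.1)
        (∑ t, genericForm K (fun ν => .inr (.inr (.inl (t, ν)))) *
          genericForm K (fun ν => .inr (.inr (.inr (t, ν))))) -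
      ∑ i, X (.inl i) * X (.inr (.inl (i, k.2)))
  else X (.inr (.inl (⟨k.1, hk⟩, k.2)))

theorem exists_eval_decompMap_eq {K : Type*} [CommRing K] {m d s N : ℕ}
    (c : Fin s × DegreeMonomials m d → K) (j : Fin s) (b : {i // i ≠ j} → K)
    (g h : Fin N → MvPolynomial (Fin m) K)
    (hg : ∀ t, (g t).totalDegree < d) (hh : ∀ t, (h t).totalDegree < d)
    (hj : tupleOfCoeffs K m d s c j =
      ∑ t, g t * h t - ∑ i, C (b i) * tupleOfCoeffs K m d s c i) :
    ∃ x, (fun k => eval x (decompMap K m d s N j k)) = c := by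
  refine ⟨Sum.elim b (Sum.elim (fun p => c (p.1, p.2))
    (Sum.elim (fun p => coeff p.2.1 (g p.1)) (fun p => coeff p.2.1 (h p.1)))), ?_⟩
  ext ⟨i, μ⟩
  by_cases hi : i = j
  · subst hi
    rw [eq_sub_iff_add_eq'] at hj
    simp only [decompMap, dif_pos, map_sub, ← coeff_map, map_sum, map_mul, map_eval_genericForm,
      Sum.elim_inl, Sum.elim_inr, sum_monomial_coeff_of_totalDegree_lt, hg, hh, eval_X, ← hj]
    simp only [coeff_add, coeff_sum, coeff_C_mul, coeff_tupleOfCoeffs, add_sub_cancel_left]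
  · simp [decompMap, hi]

theorem card_decompParams_lt {m d s N : ℕ} (j : Fin s) (hd : 0 < d) (hN : 2 * d * N + s ≤ m) :
    Fintype.card (DecompParams m d s N j) < Fintype.card (Fin s × DegreeMonomials m d) := by
  obtain ⟨s, rfl⟩ := Nat.exists_eq_add_one_of_ne_zero j.pos.ne'
  simp only [Fintype.card_sum, Fintype.card_prod, Fintype.card_subtype_compl, Fintype.card_fin,
    Fintype.card_unique, Fintype.card_coe, card_monomialsDegreeLT, Nat.card_antidiagonalTuple,
    Nat.add_sub_cancel]
  set A := m.multichoose d
  set B := ∑ k ∈ range d, m.multichoose k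
  have hdA : d * A = m * B := by
    obtain ⟨k, rfl⟩ := Nat.exists_eq_add_one_of_ne_zero hd.ne'
    exact Nat.succ_mul_multichoose m k
  have hdB : d ≤ B :=
    calc d = ∑ _k ∈ range d, 1 := by simp
      _ ≤ B := sum_le_sum fun k _ => by
        rw [Nat.multichoose_eq]; exact Nat.choose_pos (by omega)
  have hsB : s + 1 + 2 * N * B ≤ A := by
    refine Nat.le_of_mul_le_mul_left ?_ hd
    calc d * (s + 1 + 2 * N * B) = (s + 1) * d + 2 * d * N * B := by ring
      _ ≤ (s + 1) * B + 2 * d * N * B := by gcongr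
      _ = (2 * d * N + (s + 1)) * B := by ring
      _ ≤ m * B := by gcongr
      _ = d * A := hdA.symm
  linarith

theorem StrLE.mono {K σ : Type*} [CommRing K] {I : Ideal (MvPolynomial σ K)} {d r N : ℕ}
    {f : MvPolynomial σ K} (hd : 2 ≤ d) (h : StrLE I d f r) (hrN : r ≤ N) : StrLE I d f N := by
  obtain ⟨k, rfl⟩ := Nat.exists_eq_add_of_le hrN
  obtain ⟨g, h, hg, hh, hmem⟩ := h
  have hzero : ∃ a, 0 < a ∧ a < d ∧ (0 : MvPolynomial σ K).IsHomogeneous a :=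
    ⟨1, one_pos, hd, isHomogeneous_zero _ _ _⟩
  refine ⟨Fin.append g 0, Fin.append h 0, Fin.addCases (by simpa) (by simpa using fun _ => hzero),
    Fin.addCases (by simpa) (by simpa using fun _ => hzero), ?_⟩
  simpa [Fin.sum_univ_add] using hmem

theorem exists_eval_decompMap_eq_of_strLE {K : Type*} [Field K] {m d s N : ℕ}
    (c : Fin s × DegreeMonomials m d → K) {a : Fin s → K} {j : Fin s} (hj : a j ≠ 0)
    (hstr : StrLE (⊥ : Ideal (MvPolynomial (Fin m) K)) d
      (∑ i, C (a i) * tupleOfCoeffs K m d s c i) N) :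
    ∃ x, (fun k => eval x (decompMap K m d s N j k)) = c := by
  classical
  obtain ⟨g, h, hg, hh, hmem⟩ := hstr
  rw [Ideal.mem_bot, sub_eq_zero, Fintype.sum_eq_add_sum_subtype_ne _ j] at hmem
  refine exists_eval_decompMap_eq c j (fun i => a i / a j) (fun t => C (a j)⁻¹ * g t) h
    (fun t => ?_) (fun t => ?_) ?_
  · obtain ⟨α, -, hα, hgα⟩ := hg t
    exact ((hgα.C_mul _).totalDegree_le).trans_lt hα
  · obtain ⟨β, -, hβ, hhβ⟩ := hh t
    exact hhβ.totalDegree_le.trans_lt hβ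
  · have hinv : C (a j)⁻¹ * C (a j) = (1 : MvPolynomial (Fin m) K) := by
      rw [← C_mul, inv_mul_cancel₀ hj, C_1]
    simp only [mul_assoc, ← mul_sum, div_eq_inv_mul, C_mul]
    linear_combination (C (a j)⁻¹) * hmem - tupleOfCoeffs K m d s c j * hinv

theorem exists_ne_zero_eval_eq_zero_of_strLE (K : Type*) [Field K] {m d s N : ℕ} (hd : 0 < d)
    (hN : 2 * d * N + s ≤ m) :
    ∃ g : MvPolynomial (Fin s × DegreeMonomials m d) K, g ≠ 0 ∧
      ∀ (c : Fin s × DegreeMonomials m d → K) (a : Fin s → K), a ≠ 0 →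
        StrLE (⊥ : Ideal (MvPolynomial (Fin m) K)) d
          (∑ i, C (a i) * tupleOfCoeffs K m d s c i) N →
        eval c g = 0 := by
  choose q hq0 hq using fun j =>
    exists_ne_zero_forall_eval_eq_zero (card_decompParams_lt j hd hN) (decompMap K m d s N j)
  refine ⟨∏ j, q j, prod_ne_zero_iff.2 fun j _ => hq0 j, fun c a ha hstr => ?_⟩
  obtain ⟨j, hj⟩ := Function.ne_iff.1 ha
  obtain ⟨x, rfl⟩ := exists_eval_decompMap_eq_of_strLE c hj hstr
  rw [map_prod]
  exact prod_eq_zero (mem_univ j) (hq j x)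

theorem two_mul_mul_add_le_of_cast_le_div {d s m t : ℕ} (hd : 0 < d)
    (ht : (t : ℝ) ≤ ((m : ℝ) - (s : ℝ)) / ((d : ℝ) * 2 ^ d)) : 2 * d * t + s ≤ m := by
  have h2d : (2 : ℝ) ≤ 2 ^ d := by
    simpa using pow_le_pow_right₀ (by norm_num : (1 : ℝ) ≤ 2) (by omega : 1 ≤ d)
  rw [le_div_iff₀ (by positivity)] at ht
  have : (2 * d * t : ℝ) ≤ t * (d * 2 ^ d) := by
    nlinarith [mul_nonneg (mul_nonneg t.cast_nonneg d.cast_nonneg) (sub_nonneg.2 h2d)]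
  exact_mod_cast (by linarith : (2 * d * t + s : ℝ) ≤ m)

theorem stmt_11_general (K : Type) [Field K] (d s m : ℕ)
    (hd : 2 ≤ d) :
    ∃ g : MvPolynomial (Fin s × {μ // μ ∈ Finset.Nat.antidiagonalTuple m d}) K,
      g ≠ 0 ∧
      ∀ c : Fin s × {μ // μ ∈ Finset.Nat.antidiagonalTuple m d} → K,
        MvPolynomial.eval c g ≠ 0 →
        ∀ a : Fin s → K, a ≠ 0 → ∀ t : ℕ,
          (t : ℝ) ≤ ((m : ℝ) - (s : ℝ)) / ((d : ℝ) * 2 ^ d) →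
          ¬ StrLE (⊥ : Ideal (MvPolynomial (Fin m) K)) d
              (∑ i, MvPolynomial.C (a i) * tupleOfCoeffs K m d s c i) t := by
  rcases le_or_gt s m with hsm | hms
  · have hN : 2 * d * ((m - s) / (2 * d)) + s ≤ m := by
      have := Nat.mul_div_le (m - s) (2 * d); omega
    obtain ⟨g, hg0, hg⟩ := exists_ne_zero_eval_eq_zero_of_strLE K (by omega) hN
    refine ⟨g, hg0, fun c hc a ha t ht hstr =>
      hc (hg c a ha (hstr.mono hd ((Nat.le_div_iff_mul_le (by omega)).2 ?_)))⟩
    have := two_mul_mul_add_le_of_cast_le_div (by omega) ht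
    lia
  · exact ⟨1, one_ne_zero, fun c _ a _ t ht _ => by
      have := two_mul_mul_add_le_of_cast_le_div (by omega) ht; omega⟩

/-- Over an algebraically closed field `K`, for `d ≥ 2`, `s ≥ 1`,
`m ≥ d`, there is a dense open subset (the complement of the zero locus of some nonzero
polynomial `g` in the coefficients) of the space of `s`-tuples of degree-`d` forms in `m`
variables on which the collective strength exceeds `(m - s)/(d·2^d)`. -/
theorem stmt_11 (K : Type) [Field K] [IsAlgClosed K] (d s m : ℕ)
    (hd : 2 ≤ d) (hs : 1 ≤ s) (hm : d ≤ m) :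
    ∃ g : MvPolynomial (Fin s × {μ // μ ∈ Finset.Nat.antidiagonalTuple m d}) K,
      g ≠ 0 ∧
      ∀ c : Fin s × {μ // μ ∈ Finset.Nat.antidiagonalTuple m d} → K,
        MvPolynomial.eval c g ≠ 0 →
        ∀ a : Fin s → K, a ≠ 0 → ∀ t : ℕ,
          (t : ℝ) ≤ ((m : ℝ) - (s : ℝ)) / ((d : ℝ) * 2 ^ d) →
          ¬ StrLE (⊥ : Ideal (MvPolynomial (Fin m) K)) d
              (∑ i, MvPolynomial.C (a i) * tupleOfCoeffs K m d s c i) t :=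
  stmt_11_general K d s m hd
end

section
/- Let K be a field with algebraic closure K̄ and let f_1,...,f_s ∈ K[x_1,...,x_n] be forms which form a regular sequence in K[x_1,...,x_n]. Then the polynomial map (f_1,...,f_s) : K̄^n → K̄^s is surjective. -/
open MvPolynomial

/-!
By the weak Nullstellensatz it suffices that the ideal `(f₁ - a₁, …, fₛ - aₛ)` of `K̄[x]` is
proper. Regularity survives the flat base change `K[x] → K̄[x]`, the `fᵢ` have positive degree
(a nonzero constant would be a unit), and the syzygies of a regular sequence are generated by
the Koszul relations. If `1 = ∑ gᵢ (fᵢ - aᵢ)` with `deg gᵢ + deg fᵢ ≤ N` and `N > 0`, the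
degree-`N` part of this identity is a homogeneous syzygy `∑ Gᵢ fᵢ = 0` between the top parts
`Gᵢ` of the `gᵢ`, so `Gᵢ = ∑ⱼ (bᵢⱼ - bⱼᵢ) fⱼ`; replacing `gᵢ` by `gᵢ - Gᵢ + ∑ⱼ (bᵢⱼ - bⱼᵢ) aⱼ`
keeps the sum and lowers `N`. At `N = 0` all `gᵢ` vanish, so `1 = 0`.
-/

open MvPolynomial Finset RingTheory.Sequence DirectSum GradedRing

section Koszul

variable {R : Type*} [CommRing R]

theorem Ideal.ofList_ofFn {s : ℕ} (f : Fin s → R) :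
    Ideal.ofList (List.ofFn f) = Ideal.span (Set.range f) := by
  rw [Ideal.ofList]
  congr 1
  ext
  exact List.mem_ofFn' f _

theorem RingTheory.Sequence.IsWeaklyRegular.of_ofFn_succ {s : ℕ} {f : Fin (s + 1) → R}
    (hf : IsWeaklyRegular R (List.ofFn f)) :
    IsWeaklyRegular R (List.ofFn (Fin.init f)) ∧
      ∀ x, x * f (Fin.last s) ∈ Ideal.span (Set.range (Fin.init f)) →
        x ∈ Ideal.span (Set.range (Fin.init f)) := by
  rw [List.ofFn_succ', List.concat_eq_append, isWeaklyRegular_append_iff,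
    isWeaklyRegular_singleton_iff, isSMulRegular_quotient_iff_mem_of_smul_mem] at hf
  refine ⟨hf.1, fun x hx => ?_⟩
  have := hf.2 x
  simp only [smul_eq_mul, Ideal.mul_top, Ideal.ofList_ofFn] at this
  exact this (mul_comm x _ ▸ hx)

theorem RingTheory.Sequence.IsWeaklyRegular.exists_koszul_of_sum_mul_eq_zero {s : ℕ}
    {f : Fin s → R} (hf : IsWeaklyRegular R (List.ofFn f)) {g : Fin s → R}
    (hg : ∑ i, g i * f i = 0) :
    ∃ b : Fin s → Fin s → R, ∀ i, g i = ∑ j, (b i j - b j i) * f j := by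
  induction s with
  | zero => exact ⟨0, fun i => i.elim0⟩
  | succ s ih =>
    obtain ⟨hinit, hlast⟩ := hf.of_ofFn_succ
    rw [Fin.sum_univ_castSucc] at hg
    have hmem : g (Fin.last s) ∈ Ideal.span (Set.range (Fin.init f)) := by
      refine hlast _ ?_
      rw [eq_neg_of_add_eq_zero_right hg]
      exact neg_mem (Ideal.sum_mem _ fun i _ =>
        Ideal.mul_mem_left _ _ (Ideal.subset_span ⟨i, rfl⟩))
    obtain ⟨u, hu⟩ := Ideal.mem_span_range_iff_exists_fun.mp hmem
    simp only [Fin.init] at hu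
    obtain ⟨b, hb⟩ := ih hinit (g := fun i => g i.castSucc + u i * f (Fin.last s)) (by
      simpa [add_mul, sum_add_distrib, mul_right_comm _ (f (Fin.last s)), ← sum_mul, hu,
        Fin.init] using hg)
    refine ⟨Fin.snoc (fun i => Fin.snoc (b i) 0) (Fin.snoc u 0), Fin.lastCases ?_ fun i => ?_⟩
    · simp [Fin.sum_univ_castSucc, ← hu]
    · simp only [Fin.init] at hb
      simp only [Fin.snoc_castSucc, Fin.sum_univ_castSucc, Fin.snoc_last, zero_sub, neg_mul]
      linear_combination hb i

theorem Finset.sum_koszul_mul_sub {ι : Type*} [Fintype ι] (b : ι → ι → R) (x y : ι → R) :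
    ∑ i, (∑ j, (b i j - b j i) * x j) * (x i - y i) =
      ∑ i, (∑ j, (b i j - b j i) * y j) * (x i - y i) := by
  rw [← sub_eq_zero, ← sum_sub_distrib]
  have hsymm : ∑ i, ∑ j, b j i * ((x j - y j) * (x i - y i)) =
      ∑ i, ∑ j, b i j * ((x j - y j) * (x i - y i)) := by
    rw [sum_comm]
    exact sum_congr rfl fun i _ => sum_congr rfl fun j _ => by ring
  calc ∑ i, ((∑ j, (b i j - b j i) * x j) * (x i - y i) -
        (∑ j, (b i j - b j i) * y j) * (x i - y i))
      = ∑ i, ∑ j, b i j * ((x j - y j) * (x i - y i)) -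
          ∑ i, ∑ j, b j i * ((x j - y j) * (x i - y i)) := by
        rw [← sum_sub_distrib]
        refine sum_congr rfl fun i _ => ?_
        rw [← sum_sub_distrib, ← sub_mul, ← sum_sub_distrib, sum_mul]
        exact sum_congr rfl fun j _ => by ring
    _ = 0 := by rw [hsymm, sub_self]

end Koszul

section Graded

variable {A σ : Type*} [CommRing A] [SetLike σ A] [AddSubgroupClass σ A] (𝒜 : ℕ → σ)
  [GradedRing 𝒜]

/-- The degree-`n` component of `a` viewed in the shifted ring `A(-d)`: the `𝒜 (n - d)`-component
of `a`, and `0` when `n < d` (where `n - d` would truncate). -/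
noncomputable def GradedRing.shiftedProj (d n : ℕ) : A →+ A :=
  if d ≤ n then proj 𝒜 (n - d) else 0

variable {𝒜} {d n : ℕ}

theorem GradedRing.shiftedProj_of_le (h : d ≤ n) (a : A) :
    shiftedProj 𝒜 d n a = proj 𝒜 (n - d) a := by
  rw [shiftedProj, if_pos h]

theorem GradedRing.shiftedProj_of_lt (h : n < d) (a : A) : shiftedProj 𝒜 d n a = 0 := by
  rw [shiftedProj, if_neg (by omega), AddMonoidHom.zero_apply]

theorem GradedRing.proj_mul_of_mem {b : A} (hb : b ∈ 𝒜 d) (n : ℕ) (a : A) :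
    proj 𝒜 n (a * b) = shiftedProj 𝒜 d n a * b := by
  classical
  rw [proj_apply, coe_decompose_mul_of_right_mem 𝒜 n hb]
  split_ifs with h
  · rw [shiftedProj_of_le h, proj_apply]
  · rw [shiftedProj_of_lt (by omega), zero_mul]

theorem GradedRing.shiftedProj_mul_of_mem {b : A} {e : ℕ} (hb : b ∈ 𝒜 e) (a : A) :
    shiftedProj 𝒜 d n (a * b) = shiftedProj 𝒜 (d + e) n a * b := by
  rcases le_or_gt d n with h | h
  · rw [shiftedProj_of_le h, proj_mul_of_mem hb]
    rcases le_or_gt e (n - d) with h' | h'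
    · rw [shiftedProj_of_le h', shiftedProj_of_le (by omega), Nat.sub_add_eq]
    · rw [shiftedProj_of_lt h', shiftedProj_of_lt (by omega)]
  · rw [shiftedProj_of_lt h, shiftedProj_of_lt (by omega), zero_mul]

theorem GradedRing.proj_shiftedProj (k : ℕ) (a : A) :
    proj 𝒜 k (shiftedProj 𝒜 d n a) = if k + d = n then proj 𝒜 k a else 0 := by
  rcases le_or_gt d n with h | h
  · rw [shiftedProj_of_le h]
    split_ifs with hk
    · rw [show n - d = k by omega, proj_apply, proj_apply, decompose_coe, of_eq_same]
    · rw [proj_apply, proj_apply, decompose_coe, of_eq_of_ne _ _ _ (by omega)]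
      rfl
  · rw [shiftedProj_of_lt h, map_zero, if_neg (by omega)]

theorem GradedRing.shiftedProj_idem (a : A) :
    shiftedProj 𝒜 d n (shiftedProj 𝒜 d n a) = shiftedProj 𝒜 d n a := by
  rcases le_or_gt d n with h | h
  · rw [shiftedProj_of_le h, proj_shiftedProj, if_pos (by omega), shiftedProj_of_le h]
  · rw [shiftedProj_of_lt h, shiftedProj_of_lt h]

theorem GradedRing.exists_proj_eq_zero (a : A) : ∃ N, ∀ k, N < k → proj 𝒜 k a = 0 := by
  classical
  refine ⟨(decompose 𝒜 a).support.sup id, fun k hk => ?_⟩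
  by_contra h
  exact absurd (le_sup (f := id) ((mem_support_iff 𝒜 a k).mpr h)) (by simpa using hk)

theorem GradedRing.eq_zero_of_proj_eq_zero {a : A} (h : ∀ k, proj 𝒜 k a = 0) : a = 0 := by
  classical
  rw [← sum_support_decompose 𝒜 a]
  exact sum_eq_zero fun k _ => by rw [← proj_apply, h]

end Graded

section Reduction

variable {A σ : Type*} [CommRing A] [SetLike σ A] [AddSubgroupClass σ A] {𝒜 : ℕ → σ}
  [GradedRing 𝒜] {s : ℕ} {f c : Fin s → A} {d : Fin s → ℕ}

-- The hypothesis `∀ k, N < k + d i → proj 𝒜 k (g i) = 0` says `deg (g i) + d i ≤ N`,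
-- including `g i = 0` when `N < d i`.
theorem RingTheory.Sequence.IsWeaklyRegular.exists_repr_of_degree_succ
    (hreg : IsWeaklyRegular A (List.ofFn f)) (hf : ∀ i, f i ∈ 𝒜 (d i)) (hd : ∀ i, 0 < d i)
    (hc : ∀ i, c i ∈ 𝒜 0) {N : ℕ} {g : Fin s → A}
    (hg : ∀ i k, N + 1 < k + d i → proj 𝒜 k (g i) = 0)
    (htop : proj 𝒜 (N + 1) (∑ i, g i * (f i - c i)) = 0) :
    ∃ g' : Fin s → A, (∀ i k, N < k + d i → proj 𝒜 k (g' i) = 0) ∧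
      ∑ i, g' i * (f i - c i) = ∑ i, g i * (f i - c i) := by
  have hproj_c : ∀ i k (x : A), proj 𝒜 k (x * c i) = proj 𝒜 k x * c i := fun i k x => by
    rw [proj_mul_of_mem (hc i), shiftedProj_of_le (Nat.zero_le k), Nat.sub_zero]
  set G := fun i => shiftedProj 𝒜 (d i) (N + 1) (g i) with hGdef
  have hsyz : ∑ i, G i * f i = 0 := by
    rw [← htop, map_sum]
    refine sum_congr rfl fun i _ => ?_
    rw [mul_sub, map_sub, proj_mul_of_mem (hf i), hproj_c, hg i (N + 1) (by have := hd i; omega),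
      zero_mul, sub_zero]
  obtain ⟨b, hb⟩ := hreg.exists_koszul_of_sum_mul_eq_zero hsyz
  set b' := fun i j => shiftedProj 𝒜 (d i + d j) (N + 1) (b i j)
  have hG : ∀ i, G i = ∑ j, (b' i j - b' j i) * f j := by
    intro i
    calc G i = shiftedProj 𝒜 (d i) (N + 1) (G i) := (shiftedProj_idem _).symm
      _ = ∑ j, (b' i j - b' j i) * f j := by
        rw [hb i, map_sum]
        refine sum_congr rfl fun j _ => ?_
        rw [shiftedProj_mul_of_mem (hf j), map_sub]
        simp only [b', add_comm (d j) (d i)]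
  refine ⟨fun i => g i - G i + ∑ j, (b' i j - b' j i) * c j, fun i k hk => ?_, ?_⟩
  · have hlow : ∀ j, proj 𝒜 k ((b' i j - b' j i) * c j) = 0 := fun j => by
      have := hd j
      rw [hproj_c, map_sub, proj_shiftedProj, proj_shiftedProj, if_neg (by omega),
        if_neg (by omega), sub_zero, zero_mul]
    rw [map_add, map_sub, map_sum, sum_eq_zero fun j _ => hlow j, add_zero, hGdef,
      proj_shiftedProj]
    split_ifs with hk'
    · exact sub_self _
    · rw [hg i k (by omega), sub_zero]
  · have key := sum_koszul_mul_sub b' f c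
    simp only [← hG] at key
    simp only [add_mul _ _ (f _ - c _), sub_mul _ (G _),
      sum_sub_distrib, sum_add_distrib, key, sub_add_cancel]

theorem RingTheory.Sequence.IsWeaklyRegular.exists_repr_of_degree_add
    (hreg : IsWeaklyRegular A (List.ofFn f)) (hf : ∀ i, f i ∈ 𝒜 (d i)) (hd : ∀ i, 0 < d i)
    (hc : ∀ i, c i ∈ 𝒜 0) (N n : ℕ) (g : Fin s → A)
    (hg : ∀ i k, N + n < k + d i → proj 𝒜 k (g i) = 0)
    (hsum : ∀ k, N < k → proj 𝒜 k (∑ i, g i * (f i - c i)) = 0) :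
    ∃ g' : Fin s → A, (∀ i k, N < k + d i → proj 𝒜 k (g' i) = 0) ∧
      ∑ i, g' i * (f i - c i) = ∑ i, g i * (f i - c i) := by
  induction n generalizing g with
  | zero => exact ⟨g, hg, rfl⟩
  | succ n ih =>
    obtain ⟨g₁, hg₁, heq⟩ := hreg.exists_repr_of_degree_succ (N := N + n) hf hd hc
      (fun i k hk => hg i k (by omega)) (hsum _ (by omega))
    obtain ⟨g', hg', heq'⟩ := ih g₁ hg₁ (heq ▸ hsum)
    exact ⟨g', hg', heq'.trans heq⟩

theorem RingTheory.Sequence.IsWeaklyRegular.span_sub_ne_top [Nontrivial A]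
    (hreg : IsWeaklyRegular A (List.ofFn f)) (hf : ∀ i, f i ∈ 𝒜 (d i)) (hd : ∀ i, 0 < d i)
    (hc : ∀ i, c i ∈ 𝒜 0) : Ideal.span (Set.range fun i => f i - c i) ≠ ⊤ := by
  intro htop
  obtain ⟨u, hu⟩ := Ideal.mem_span_range_iff_exists_fun.mp (htop ▸ Submodule.mem_top (x := 1))
  choose M hM using fun i => exists_proj_eq_zero (𝒜 := 𝒜) (u i)
  have hone : ∀ k, 0 < k → proj 𝒜 k (1 : A) = 0 := fun k hk => by
    rw [proj_apply, decompose_of_mem_ne 𝒜 SetLike.GradedOne.one_mem hk.ne]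
  obtain ⟨g, hg, hsum⟩ := hreg.exists_repr_of_degree_add hf hd hc 0 (∑ i, (M i + d i)) u
    (fun i k hk => hM i k (by
      have := single_le_sum (f := fun i => M i + d i) (fun _ _ => Nat.zero_le _) (mem_univ i)
      omega))
    (hu ▸ hone)
  have hg0 : ∀ i, g i = 0 := fun i =>
    eq_zero_of_proj_eq_zero fun k => hg i k (by have := hd i; omega)
  simp only [hg0, zero_mul, sum_const_zero, hu] at hsum
  exact zero_ne_one hsum

end Reduction

attribute [local instance] MvPolynomial.algebraMvPolynomial in
theorem RingTheory.Sequence.IsWeaklyRegular.map_mvPolynomial {R S ι : Type*} [CommRing R]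
    [CommRing S] [Algebra R S] [Module.Flat R S] {rs : List (MvPolynomial ι R)}
    (h : IsWeaklyRegular (MvPolynomial ι R) rs) :
    IsWeaklyRegular (MvPolynomial ι S) (rs.map (map (algebraMap R S))) :=
  have : Module.Flat (MvPolynomial ι R) (MvPolynomial ι S) :=
    Module.Flat.isBaseChange R (MvPolynomial ι R) S _
      (Algebra.IsPushout.out (R := R) (S := MvPolynomial ι R) (R' := S))
  h.of_flat

theorem MvPolynomial.IsHomogeneous.exists_pos_of_not_isUnit {K ι : Type*} [Field K]
    {p : MvPolynomial ι K} {m : ℕ} (hp : p.IsHomogeneous m) (hu : ¬IsUnit p) :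
    ∃ e, 0 < e ∧ p.IsHomogeneous e := by
  by_cases hp0 : p = 0
  · exact ⟨1, one_pos, hp0 ▸ isHomogeneous_zero _ _ _⟩
  refine ⟨m, Nat.pos_of_ne_zero fun hm => hu ?_, hp⟩
  have hC := totalDegree_eq_zero_iff_eq_C.mp (hm ▸ hp.totalDegree hp0)
  rw [hC] at hp0 ⊢
  exact (isUnit_iff_ne_zero.mpr fun hr => hp0 (by rw [hr, map_zero])).map C

theorem MvPolynomial.exists_eval_eq_zero_of_ne_top {k ι : Type*} [Field k] [IsAlgClosed k]
    [Finite ι] {I : Ideal (MvPolynomial ι k)} (hI : I ≠ ⊤) : ∃ x, ∀ p ∈ I, eval x p = 0 := by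
  obtain ⟨M, hM, hIM⟩ := Ideal.exists_le_maximal I hI
  obtain ⟨x, rfl⟩ := eq_vanishingIdeal_singleton_of_isMaximal k hM
  exact ⟨x, fun p hp => (mem_vanishingIdeal_singleton_iff x p).mp (hIM hp)⟩

/-- If forms `f 1, ..., f s ∈ K[x_1,...,x_n]` form a regular sequence,
then the induced polynomial map `K̄ⁿ → K̄ˢ` is surjective. -/
theorem stmt_13 (K : Type) [Field K] (n s : ℕ)
    (f : Fin s → MvPolynomial (Fin n) K) (df : Fin s → ℕ)
    (hf : ∀ i, (f i).IsHomogeneous (df i))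
    (hreg : RingTheory.Sequence.IsRegular (MvPolynomial (Fin n) K) (List.ofFn f)) :
    ∀ a : Fin s → AlgebraicClosure K, ∃ x : Fin n → AlgebraicClosure K,
      ∀ i, MvPolynomial.eval x
        (MvPolynomial.map (algebraMap K (AlgebraicClosure K)) (f i)) = a i := by
  intro a
  let := MvPolynomial.gradedAlgebra (σ := Fin n) (R := AlgebraicClosure K)
  have hproper : Ideal.span (Set.range f) ≠ ⊤ := by
    simpa [ne_comm, Ideal.ofList_ofFn, Ideal.mul_top] using hreg.top_ne_smul
  choose d hd hfd using fun i => (hf i).exists_pos_of_not_isUnit fun hu =>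
    hproper (Ideal.eq_top_of_isUnit_mem _ (Ideal.subset_span ⟨i, rfl⟩) hu)
  have hregL := hreg.toIsWeaklyRegular.map_mvPolynomial (S := AlgebraicClosure K)
  rw [List.map_ofFn] at hregL
  obtain ⟨x, hx⟩ := exists_eval_eq_zero_of_ne_top <|
    hregL.span_sub_ne_top (𝒜 := homogeneousSubmodule (Fin n) (AlgebraicClosure K))
      (fun i => (mem_homogeneousSubmodule _ _).mpr ((hfd i).map (algebraMap K _))) hd
      (c := fun i => C (a i)) fun i => (mem_homogeneousSubmodule _ _).mpr (isHomogeneous_C _ _)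
  exact ⟨x, fun i => by simpa [sub_eq_zero] using hx _ (Ideal.subset_span ⟨i, rfl⟩)⟩
end
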